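/- Let $V:\{1,\ldots,d\}\to[0,\infty)$ satisfy $V(r)=0$ for a fixed $r$, and $V(s)\ge c>0$ for all $s<r$. Let $\hat V_n(s)=V(s)+\epsilon_n(s)$ where $\max_s|\epsilon_n(s)|=O_P(n^{-1/2})$, and let $\lambda_n>0$ be deterministic with $\lambda_n\to 0$ and $n^{1/2}\lambda_n\to\infty$. Define $\hat\varrho_n(s)=\hat V_n(s)+\lambda_n s$ and $\hat r=\arg\min_s\hat\varrho_n(s)$ (smallest minimizer). Then $\mathbb{P}(\hat r=r)\to 1$ as $n\to\infty$. -/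
import Mathlib


open MeasureTheory ProbabilityTheory Filter

/-- **Rank-selection consistency (abstract version of Theorem 6).** Let
`V : {1,…,d} → [0,∞)` with `V(r) = 0` and `V(s) ≥ c > 0` for all `s < r`. Let
`V̂ₙ(s) = V(s) + εₙ(s)` with `max_s |εₙ(s)| = O_P(n^{-1/2})`, and let `λₙ > 0` be
deterministic with `λₙ → 0` and `√n · λₙ → ∞`. Define `ρ̂ₙ(s) = V̂ₙ(s) + λₙ s` and let
`r̂ₙ` be the smallest minimizer of `ρ̂ₙ` over `{1,…,d}`. Then `ℙ(r̂ₙ = r) → 1`. -/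
theorem stmt_17 {Ω : Type*} [MeasureSpace Ω] [IsProbabilityMeasure (ℙ : Measure Ω)]
    (d r : ℕ) (hr1 : 1 ≤ r) (hrd : r ≤ d)
    (V : ℕ → ℝ) (hV0 : ∀ s, 0 ≤ V s) (hVr : V r = 0)
    (c : ℝ) (hc : 0 < c) (hVlow : ∀ s, 1 ≤ s → s < r → c ≤ V s)
    (eps : ℕ → Ω → ℕ → ℝ)
    (hOP : ∀ δ > (0 : ℝ), ∃ K : ℝ, ∀ᶠ n : ℕ in atTop,
      (ℙ {ω | ∃ s ∈ Finset.Icc 1 d, K / Real.sqrt n < |eps n ω s|}).toReal < δ)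
    (lam : ℕ → ℝ) (hlampos : ∀ n, 0 < lam n)
    (hlam0 : Tendsto lam atTop (nhds 0))
    (hlamInf : Tendsto (fun n : ℕ => Real.sqrt n * lam n) atTop atTop)
    (rhat : ℕ → Ω → ℕ)
    (hrhat_mem : ∀ n ω, rhat n ω ∈ Finset.Icc 1 d)
    (hrhat_min : ∀ n ω, ∀ s ∈ Finset.Icc 1 d,
      V (rhat n ω) + eps n ω (rhat n ω) + lam n * rhat n ω ≤ V s + eps n ω s + lam n * s)
    (hrhat_smallest : ∀ n ω, ∀ s ∈ Finset.Icc 1 d,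
      V s + eps n ω s + lam n * s =
        V (rhat n ω) + eps n ω (rhat n ω) + lam n * rhat n ω → rhat n ω ≤ s) :
    Tendsto (fun n => (ℙ {ω | rhat n ω = r}).toReal) atTop (nhds 1) := by
  rw [Metric.tendsto_atTop]
  intro δ hδ
  obtain ⟨K0, hK0⟩ := hOP δ hδ
  set K := max K0 1 with hKdef
  have hKpos : (0:ℝ) < K := lt_of_lt_of_le one_pos (le_max_right _ _)
  have hsq : Tendsto (fun n : ℕ => Real.sqrt n) atTop atTop := by
    apply tendsto_atTop_atTop_of_monotone
    · exact fun a b hab => Real.sqrt_le_sqrt (by exact_mod_cast hab)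
    · intro b
      refine ⟨⌈b ^ 2⌉₊, ?_⟩
      calc b ≤ |b| := le_abs_self b
        _ = Real.sqrt (b ^ 2) := (Real.sqrt_sq_eq_abs b).symm
        _ ≤ Real.sqrt (⌈b ^ 2⌉₊ : ℝ) := Real.sqrt_le_sqrt (Nat.le_ceil _)
  have h1 : ∀ᶠ n : ℕ in atTop, 2 * K / Real.sqrt n + lam n * d < c := by
    have ht : Tendsto (fun n : ℕ => 2 * K / Real.sqrt n + lam n * d) atTop (nhds 0) := by
      have h1' : Tendsto (fun n : ℕ => 2 * K / Real.sqrt n) atTop (nhds 0) :=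
        tendsto_const_nhds.div_atTop hsq
      have h2' : Tendsto (fun n : ℕ => lam n * d) atTop (nhds 0) := by
        simpa using hlam0.mul_const (d : ℝ)
      simpa using h1'.add h2'
    exact ht.eventually_lt_const hc
  have h2 : ∀ᶠ n : ℕ in atTop, 2 * K < Real.sqrt n * lam n :=
    hlamInf.eventually_gt_atTop (2 * K)
  have hrmem : r ∈ Finset.Icc 1 d := Finset.mem_Icc.mpr ⟨hr1, hrd⟩
  rw [← eventually_atTop]
  filter_upwards [hK0, h1, h2, eventually_ge_atTop 1] with n hbad0 hsmall hbig hn1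
  have hsqpos : (0:ℝ) < Real.sqrt n :=
    Real.sqrt_pos.mpr (by exact_mod_cast Nat.lt_of_lt_of_le Nat.zero_lt_one hn1)
  -- the bad event with K is contained in the bad event with K0
  have hmono : {ω : Ω | ∃ s ∈ Finset.Icc 1 d, K / Real.sqrt n < |eps n ω s|} ⊆
      {ω : Ω | ∃ s ∈ Finset.Icc 1 d, K0 / Real.sqrt n < |eps n ω s|} := by
    rintro ω ⟨s, hs, hlt⟩
    refine ⟨s, hs, lt_of_le_of_lt ?_ hlt⟩
    exact (div_le_div_iff_of_pos_right hsqpos).mpr (le_max_left _ _)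
  -- on the complement of the bad event, rhat = r
  have hsub : {ω : Ω | rhat n ω = r}ᶜ ⊆
      {ω : Ω | ∃ s ∈ Finset.Icc 1 d, K / Real.sqrt n < |eps n ω s|} := by
    intro ω hω
    by_contra hnot
    simp only [Set.mem_setOf_eq] at hnot
    push_neg at hnot
    apply hω
    show rhat n ω = r
    set ρ := rhat n ω with hρdef
    have hρmem : ρ ∈ Finset.Icc 1 d := hrhat_mem n ω
    obtain ⟨hρ1, hρd⟩ := Finset.mem_Icc.mp hρmem
    have hepsρ := abs_le.mp (hnot ρ hρmem)
    have hepsr := abs_le.mp (hnot r hrmem)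
    have hmin := hrhat_min n ω r hrmem
    rw [hVr] at hmin
    rcases lt_trichotomy ρ r with hlt | heq | hgt
    · exfalso
      have hcρ : c ≤ V ρ := hVlow ρ hρ1 hlt
      have hρ0 : (0:ℝ) ≤ lam n * ρ :=
        mul_nonneg (hlampos n).le (Nat.cast_nonneg ρ)
      have hrd' : lam n * (r : ℝ) ≤ lam n * (d : ℝ) :=
        mul_le_mul_of_nonneg_left (by exact_mod_cast hrd) (hlampos n).le
      have hK2 : 2 * K / Real.sqrt n = K / Real.sqrt n + K / Real.sqrt n := by ring
      linarith [hepsρ.1, hepsρ.2, hepsr.1, hepsr.2]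
    · exact heq
    · exfalso
      have hne : V r + eps n ω r + lam n * r ≠
          V ρ + eps n ω ρ + lam n * ρ := by
        intro h
        exact absurd (hrhat_smallest n ω r hrmem h) (not_le.mpr hgt)
      rw [hVr] at hne
      have hstrict : V ρ + eps n ω ρ + lam n * ρ < 0 + eps n ω r + lam n * r :=
        lt_of_le_of_ne hmin (Ne.symm hne)
      have hρr : (r:ℝ) + 1 ≤ (ρ:ℝ) := by exact_mod_cast hgt
      have hVρ : 0 ≤ V ρ := hV0 ρ
      have hlamlt : lam n < 2 * K / Real.sqrt n := by
        have : lam n * ((ρ:ℝ) - r) < 2 * (K / Real.sqrt n) := by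
          linarith [hepsρ.1, hepsr.2]
        have h1' : lam n * 1 ≤ lam n * ((ρ:ℝ) - r) :=
          mul_le_mul_of_nonneg_left (by linarith) (hlampos n).le
        calc lam n = lam n * 1 := by ring
          _ ≤ lam n * ((ρ:ℝ) - r) := h1'
          _ < 2 * (K / Real.sqrt n) := this
          _ = 2 * K / Real.sqrt n := by ring
      have : Real.sqrt n * lam n < 2 * K := by
        have := (lt_div_iff₀ hsqpos).mp hlamlt
        linarith [this]
      linarith
  -- measure bookkeeping
  set A := {ω : Ω | rhat n ω = r} with hA
  have hAc : (ℙ Aᶜ).toReal < δ := by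
    have hle : ℙ Aᶜ ≤ ℙ {ω : Ω | ∃ s ∈ Finset.Icc 1 d, K0 / Real.sqrt n < |eps n ω s|} :=
      measure_mono (hsub.trans hmono)
    have hfin : ℙ {ω : Ω | ∃ s ∈ Finset.Icc 1 d, K0 / Real.sqrt n < |eps n ω s|} ≠ ⊤ :=
      measure_ne_top _ _
    exact lt_of_le_of_lt (ENNReal.toReal_le_toReal (measure_ne_top _ _) hfin |>.mpr hle) hbad0
  have hsum : (1:ℝ) ≤ (ℙ A).toReal + (ℙ Aᶜ).toReal := by
    have h1' : (ℙ (Set.univ : Set Ω)) ≤ ℙ A + ℙ Aᶜ := by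
      rw [← Set.union_compl_self A]
      exact measure_union_le _ _
    rw [measure_univ] at h1'
    have := ENNReal.toReal_le_toReal (by norm_num)
      (ENNReal.add_ne_top.mpr ⟨measure_ne_top _ _, measure_ne_top _ _⟩) |>.mpr h1'
    rwa [ENNReal.toReal_one, ENNReal.toReal_add (measure_ne_top _ _) (measure_ne_top _ _)] at this
  have hle1 : (ℙ A).toReal ≤ 1 := by
    simpa using ENNReal.toReal_mono (by norm_num) (prob_le_one (μ := (ℙ : Measure Ω)) (s := A))
  rw [Real.dist_eq, abs_sub_lt_iff]
  constructor <;> linarith
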